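/- arXiv:1712.04236 — 13 statements merged into one kernel-verified Lean document; each statement's English description precedes it below -/
import Mathlib

section
/- If v is an ultra valuation on a finite set Ω (i.e., v satisfies the Exchange property), then for every subset S ⊆ Ω the marginal valuation v_S, defined on subsets of Ω \ S by v_S(B) = v(S ∪ B) − v(S), is also an ultra valuation. -/
/-- `v` is an ultra valuation: the Exchange property. -/
def IsUltra {α : Type*} [DecidableEq α] (v : Finset α → ℝ) : Prop :=
  ∀ A B : Finset α, A.card ≤ B.card → ∀ x ∈ A \ B, ∃ y ∈ B \ A,
    v A + v B ≤ v (insert y (A.erase x)) + v (insert x (B.erase y))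

/-- If `v` is an ultra valuation then every marginal valuation
`v_S(B) = v(S ∪ B) - v(S)`, viewed as a valuation on subsets of `Ω \ S`,
is also an ultra valuation. -/
theorem marginal_ultra {α : Type*} [Fintype α] [DecidableEq α]
    (v : Finset α → ℝ) (hv : IsUltra v) (S : Finset α) :
    ∀ A B : Finset α, Disjoint A S → Disjoint B S → A.card ≤ B.card →
      ∀ x ∈ A \ B, ∃ y ∈ B \ A,
        (v (S ∪ A) - v S) + (v (S ∪ B) - v S) ≤
          (v (S ∪ insert y (A.erase x)) - v S) +
          (v (S ∪ insert x (B.erase y)) - v S) := by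
  intro A B hAS hBS hcard x hx
  rw [Finset.mem_sdiff] at hx
  obtain ⟨hxA, hxB⟩ := hx
  have hxS : x ∉ S := fun h => (Finset.disjoint_left.mp hAS) hxA h
  have hcard' : (S ∪ A).card ≤ (S ∪ B).card := by
    rw [Finset.card_union_of_disjoint hAS.symm, Finset.card_union_of_disjoint hBS.symm]
    omega
  have hxmem : x ∈ (S ∪ A) \ (S ∪ B) := by
    simp [Finset.mem_sdiff, hxA, hxB, hxS]
  obtain ⟨y, hy, hineq⟩ := hv (S ∪ A) (S ∪ B) hcard' x hxmem
  rw [Finset.mem_sdiff, Finset.mem_union, Finset.mem_union] at hy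
  obtain ⟨hyB', hyA'⟩ := hy
  push_neg at hyA'
  have hyB : y ∈ B := hyB'.resolve_left hyA'.1
  have hyS : y ∉ S := hyA'.1
  have hyA : y ∉ A := hyA'.2
  refine ⟨y, Finset.mem_sdiff.mpr ⟨hyB, hyA⟩, ?_⟩
  have e1 : insert y ((S ∪ A).erase x) = S ∪ insert y (A.erase x) := by
    ext z
    simp only [Finset.mem_insert, Finset.mem_erase, Finset.mem_union]
    constructor
    · rintro (rfl | ⟨hzx, hz | hz⟩)
      · right; left; rfl
      · left; exact hz
      · right; right; exact ⟨hzx, hz⟩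
    · rintro (hz | rfl | ⟨hzx, hz⟩)
      · right; exact ⟨fun h => hxS (h ▸ hz), Or.inl hz⟩
      · left; rfl
      · right; exact ⟨hzx, Or.inr hz⟩
  have e2 : insert x ((S ∪ B).erase y) = S ∪ insert x (B.erase y) := by
    ext z
    simp only [Finset.mem_insert, Finset.mem_erase, Finset.mem_union]
    constructor
    · rintro (rfl | ⟨hzy, hz | hz⟩)
      · right; left; rfl
      · left; exact hz
      · right; right; exact ⟨hzy, hz⟩
    · rintro (hz | rfl | ⟨hzy, hz⟩)
      · right; exact ⟨fun h => hyS (h ▸ hz), Or.inl hz⟩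
      · left; rfl
      · right; exact ⟨hzy, Or.inr hz⟩
  rw [e1, e2] at hineq
  linarith
end

section
/- Every ultra valuation satisfies the law of aggregate demand: if Ω = X ∪ Y with X ∩ Y = ∅, and A ⊆ X maximizes v among all subsets of X, then there exists B ⊆ Ω maximizing v among all subsets of Ω with |B| ≥ |A|. -/
lemma ultra_step {α : Type*} [DecidableEq α] (v : Finset α → ℝ) (hv : IsUltra v)
    (S : Finset α) (z : α) (A : Finset α) (hAS : A ⊆ S) (hmax : ∀ C ⊆ S, v C ≤ v A) :
    ∃ B ⊆ insert z S, (∀ C ⊆ insert z S, v C ≤ v B) ∧ A.card ≤ B.card := by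
  classical
  obtain ⟨B0, hB0mem, hB0max⟩ :=
    Finset.exists_max_image ((insert z S).powerset) v ⟨∅, by simp⟩
  set P : ℕ → Prop := fun n => ∃ B, B ⊆ insert z S ∧ (∀ C ⊆ insert z S, v C ≤ v B) ∧
    (A \ B).card = n with hPdef
  have hP : ∃ n, P n :=
    ⟨_, B0, Finset.mem_powerset.1 hB0mem,
      fun C hC => hB0max C (Finset.mem_powerset.2 hC), rfl⟩
  obtain ⟨B, hBsub, hBmax, hBcard⟩ := Nat.find_spec hP
  by_cases hcard : A.card ≤ B.card
  · exact ⟨B, hBsub, hBmax, hcard⟩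
  push_neg at hcard
  by_cases hBA : B \ A = ∅
  · have hBsubA : B ⊆ A := Finset.sdiff_eq_empty_iff_subset.1 hBA
    exact ⟨A, hAS.trans (Finset.subset_insert _ _),
      fun C hC => (hBmax C hC).trans (hmax B (hBsubA.trans hAS)), le_refl _⟩
  by_cases hex : ∃ x ∈ B \ A, x ∈ S
  · -- swap an S-element of B \ A for an element of A \ B
    obtain ⟨x, hxBA, hxS⟩ := hex
    obtain ⟨y, hyAB, hineq⟩ := hv B A hcard.le x hxBA
    have hxA : x ∉ A := (Finset.mem_sdiff.1 hxBA).2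
    have hyA : y ∈ A := (Finset.mem_sdiff.1 hyAB).1
    have h1 : v (insert x (A.erase y)) ≤ v A :=
      hmax _ (Finset.insert_subset hxS ((Finset.erase_subset _ _).trans hAS))
    have hB'sub : insert y (B.erase x) ⊆ insert z S :=
      Finset.insert_subset (Finset.mem_insert_of_mem (hAS hyA))
        ((Finset.erase_subset _ _).trans hBsub)
    have h2 : v B ≤ v (insert y (B.erase x)) := by linarith
    have hset : A \ insert y (B.erase x) = (A \ B).erase y := by
      ext a
      simp only [Finset.mem_sdiff, Finset.mem_insert, Finset.mem_erase]
      have hax : a ∈ A → a ≠ x := fun h e => hxA (e ▸ h)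
      tauto
    have hlt' : (A \ insert y (B.erase x)).card < Nat.find hP := by
      rw [hset, ← hBcard]
      exact Finset.card_erase_lt_of_mem hyAB
    exact absurd ⟨_, hB'sub, fun C hC => (hBmax C hC).trans h2, rfl⟩ (Nat.find_min hP hlt')
  · -- B \ A = {z}
    push_neg at hex
    have hBAz : B \ A = {z} := by
      apply Finset.eq_singleton_iff_nonempty_unique_mem.2
      refine ⟨Finset.nonempty_iff_ne_empty.2 hBA, fun x hx => ?_⟩
      have := hBsub (Finset.mem_sdiff.1 hx).1
      rcases Finset.mem_insert.1 this with h | h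
      · exact h
      · exact absurd h (hex x hx)
    have hzBA : z ∈ B \ A := hBAz ▸ Finset.mem_singleton_self z
    have hzA : z ∉ A := (Finset.mem_sdiff.1 hzBA).2
    obtain ⟨y, hyAB, hineq⟩ := hv B A hcard.le z hzBA
    have hyA : y ∈ A := (Finset.mem_sdiff.1 hyAB).1
    have hBz : B.erase z ⊆ S := by
      intro a ha
      have h := hBsub (Finset.erase_subset _ _ ha)
      rcases Finset.mem_insert.1 h with h' | h'
      · exact absurd h' (Finset.mem_erase.1 ha).1
      · exact h'
    have h1 : v (insert y (B.erase z)) ≤ v A := hmax _ (Finset.insert_subset (hAS hyA) hBz)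
    have h2 : v B ≤ v (insert z (A.erase y)) := by linarith
    have hB''sub : insert z (A.erase y) ⊆ insert z S :=
      Finset.insert_subset (Finset.mem_insert_self _ _)
        (((Finset.erase_subset _ _).trans hAS).trans (Finset.subset_insert _ _))
    have hset : A \ insert z (A.erase y) = {y} := by
      ext a
      simp only [Finset.mem_sdiff, Finset.mem_insert, Finset.mem_erase, Finset.mem_singleton]
      have haz : a ∈ A → a ≠ z := fun h e => hzA (e ▸ h)
      constructor
      · rintro ⟨haA, h⟩
        by_contra hay
        exact h (Or.inr ⟨hay, haA⟩)
      · rintro rfl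
        exact ⟨hyA, fun h => by rcases h with h | ⟨h, _⟩ <;> [exact haz hyA h; exact h rfl]⟩
    have hbig : 2 ≤ (A \ B).card := by
      have e1 : (A \ B).card + B.card = (A ∪ B).card := Finset.card_sdiff_add_card A B
      have e2 : (B \ A).card + A.card = (A ∪ B).card := by
        rw [Finset.card_sdiff_add_card, Finset.union_comm]
      have e3 : (B \ A).card = 1 := by rw [hBAz]; simp
      omega
    have hlt' : (A \ insert z (A.erase y)).card < Nat.find hP := by
      rw [hset, ← hBcard, Finset.card_singleton]
      omega
    exact absurd ⟨_, hB''sub, fun C hC => (hBmax C hC).trans h2, rfl⟩ (Nat.find_min hP hlt')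

/-- Every ultra valuation satisfies the law of aggregate demand. -/
theorem ultra_law_of_aggregate_demand {α : Type*} [Fintype α] [DecidableEq α]
    (v : Finset α → ℝ) (hv : IsUltra v)
    (X Y : Finset α) (hunion : X ∪ Y = Finset.univ) (hdisj : X ∩ Y = ∅)
    (A : Finset α) (hAX : A ⊆ X) (hmax : ∀ C ⊆ X, v C ≤ v A) :
    ∃ B : Finset α, (∀ C : Finset α, v C ≤ v B) ∧ A.card ≤ B.card := by
  classical
  have key : ∀ T : Finset α, ∃ B ⊆ X ∪ T, (∀ C ⊆ X ∪ T, v C ≤ v B) ∧ A.card ≤ B.card := by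
    intro T
    induction T using Finset.induction_on with
    | empty => exact ⟨A, by simpa using hAX, by simpa using hmax, le_refl _⟩
    | @insert z T hzT ih =>
      obtain ⟨B1, hB1sub, hB1max, hB1card⟩ := ih
      obtain ⟨B2, hB2sub, hB2max, hB2card⟩ := ultra_step v hv (X ∪ T) z B1 hB1sub hB1max
      rw [Finset.union_insert]
      exact ⟨B2, hB2sub, hB2max, hB1card.trans hB2card⟩
  obtain ⟨B, _, hBmax, hBcard⟩ := key Y
  rw [hunion] at hBmax
  exact ⟨B, fun C => hBmax C (Finset.subset_univ C), hBcard⟩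
end

section
/- If a valuation v satisfies the Ultra property, then v satisfies the Exchange property (i.e., v is an ultra valuation). -/
/-- Complementarity of `x` and `y` given `A`. -/
def comp {α : Type*} [DecidableEq α] (v : Finset α → ℝ) (A : Finset α) (x y : α) : ℝ :=
  v (insert x (insert y A)) - v (insert x A) - v (insert y A) + v A

def UltraProp {α : Type*} [DecidableEq α] (v : Finset α → ℝ) : Prop :=
  ∀ A : Finset α, ∀ x y z : α, x ∉ A → y ∉ A → z ∉ A →
    x ≠ y → x ≠ z → y ≠ z →
    comp v A x y > comp v A x z → comp v A y z = comp v A x y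

namespace UltraExchangeAux

variable {α : Type*} [DecidableEq α]

def gval (v : Finset α → ℝ) (C U : Finset α) (t : α) : ℝ :=
  v (insert t C) + v (U.erase t)

lemma comp_comm (v : Finset α → ℝ) (A : Finset α) (x y : α) :
    comp v A x y = comp v A y x := by
  unfold comp
  rw [Finset.insert_comm]
  ring

lemma gval_insert (v : Finset α → ℝ) (C U : Finset α) (w t : α) :
    gval v (insert w C) U t
      = gval v C U t + (v (insert w C) - v C) + comp v C w t := by
  unfold gval comp
  rw [Finset.insert_comm t w]
  ring

lemma sdiff_insert' (U C : Finset α) (w : α) :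
    U \ insert w C = (U \ C).erase w := by
  ext x
  simp only [Finset.mem_sdiff, Finset.mem_erase, Finset.mem_insert]
  tauto

lemma erase_eq_insert_of_pair (C U : Finset α) (a b : α) (hsub : C ⊆ U)
    (hab : a ≠ b) (h : U \ C = {a, b}) : U.erase a = insert b C := by
  have ha : a ∈ U ∧ a ∉ C := by
    have : a ∈ U \ C := by rw [h]; simp
    simpa [Finset.mem_sdiff] using this
  have hb : b ∈ U ∧ b ∉ C := by
    have : b ∈ U \ C := by rw [h]; simp
    simpa [Finset.mem_sdiff] using this
  ext x
  simp only [Finset.mem_erase, Finset.mem_insert]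
  constructor
  · rintro ⟨hxa, hxU⟩
    by_cases hxC : x ∈ C
    · exact Or.inr hxC
    · have : x ∈ U \ C := Finset.mem_sdiff.mpr ⟨hxU, hxC⟩
      rw [h] at this
      simp only [Finset.mem_insert, Finset.mem_singleton] at this
      rcases this with h' | h'
      · exact absurd h' hxa
      · exact Or.inl h'
  · rintro (rfl | hxC)
    · exact ⟨hab.symm, hb.1⟩
    · exact ⟨fun hh => ha.2 (hh ▸ hxC), hsub hxC⟩

lemma lemma0 (v : Finset α → ℝ) (hv : UltraProp v) :
    ∀ n (C U : Finset α), C ⊆ U → C.card + 2 ≤ U.card → (U \ C).card = n →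
      ∀ u ∈ U \ C, ∃ t ∈ U \ C, t ≠ u ∧ gval v C U u ≤ gval v C U t := by
  intro n
  induction n using Nat.strong_induction_on with
  | _ n ih =>
  intro C U hsub hmargin hcard u hu
  have hUC : (U \ C).card = U.card - C.card := Finset.card_sdiff_of_subset hsub
  have hCU : C.card ≤ U.card := Finset.card_le_card hsub
  have hn2 : 2 ≤ n := by omega
  rcases eq_or_lt_of_le hn2 with h2 | h3
  · -- n = 2 : the two values of gval are equal
    obtain ⟨a, b, hab, hpair⟩ := Finset.card_eq_two.mp (show (U \ C).card = 2 by omega)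
    have hu2 : u = a ∨ u = b := by
      have := hu; rw [hpair] at this
      simpa using this
    rcases hu2 with rfl | rfl
    · refine ⟨b, by rw [hpair]; simp, hab.symm, ?_⟩
      have e1 : U.erase u = insert b C := erase_eq_insert_of_pair C U u b hsub hab hpair
      have e2 : U.erase b = insert u C := by
        refine erase_eq_insert_of_pair C U b u hsub hab.symm ?_
        rw [hpair]; exact Finset.pair_comm u b
      unfold gval
      rw [e1, e2]
      ring_nf
      exact le_refl _
    · refine ⟨a, by rw [hpair]; simp, hab, ?_⟩
      have e1 : U.erase u = insert a C := by
        refine erase_eq_insert_of_pair C U u a hsub hab.symm ?_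
        rw [hpair]; exact Finset.pair_comm a u
      have e2 : U.erase a = insert u C := erase_eq_insert_of_pair C U a u hsub hab hpair
      unfold gval
      rw [e1, e2]
      ring_nf
      exact le_refl _
  · -- n ≥ 3
    by_contra hcon
    push_neg at hcon
    have hstrict : ∀ t ∈ U \ C, t ≠ u → gval v C U t < gval v C U u := hcon
    obtain ⟨huU, huC⟩ := Finset.mem_sdiff.mp hu
    have hDne : ((U \ C).erase u).Nonempty := by
      rw [← Finset.card_pos, Finset.card_erase_of_mem hu, hcard]; omega
    obtain ⟨w, hwD', hwmax⟩ := ((U \ C).erase u).exists_max_image (fun t => comp v C u t) hDne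
    have hwu : w ≠ u := (Finset.mem_erase.mp hwD').1
    have hwD : w ∈ U \ C := Finset.mem_of_mem_erase hwD'
    obtain ⟨hwU, hwC⟩ := Finset.mem_sdiff.mp hwD
    have hsub₂ : insert w C ⊆ U := Finset.insert_subset hwU hsub
    have hmargin₂ : (insert w C).card + 2 ≤ U.card := by
      rw [Finset.card_insert_of_notMem hwC]; omega
    have hUC₂ : U \ insert w C = (U \ C).erase w := sdiff_insert' U C w
    have hcard₂ : (U \ insert w C).card = n - 1 := by
      rw [hUC₂, Finset.card_erase_of_mem hwD, hcard]
    have hu₂ : u ∈ U \ insert w C := by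
      rw [hUC₂]; exact Finset.mem_erase.mpr ⟨hwu.symm, hu⟩
    obtain ⟨t₁, ht₁, ht₁u, ht₁le⟩ :=
      ih (n - 1) (by omega) (insert w C) U hsub₂ hmargin₂ hcard₂ u hu₂
    rw [hUC₂] at ht₁
    have ht₁w : t₁ ≠ w := (Finset.mem_erase.mp ht₁).1
    have ht₁D : t₁ ∈ U \ C := Finset.mem_of_mem_erase ht₁
    obtain ⟨ht₁U, ht₁C⟩ := Finset.mem_sdiff.mp ht₁D
    have h1 := hstrict t₁ ht₁D ht₁u
    have b1 := gval_insert v C U w t₁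
    have b2 := gval_insert v C U w u
    have hgt : comp v C w t₁ > comp v C w u := by linarith
    have hult := hv C w t₁ u hwC ht₁C huC ht₁w.symm hwu ht₁u hgt
    -- hult : comp v C t₁ u = comp v C w t₁
    have hmax := hwmax t₁ (Finset.mem_erase.mpr ⟨ht₁u, ht₁D⟩)
    -- hmax : comp v C u t₁ ≤ comp v C u w
    rw [comp_comm v C u t₁, comp_comm v C u w] at hmax
    linarith

lemma lemmaMain (v : Finset α → ℝ) (hv : UltraProp v) :
    ∀ k (C U : Finset α), (C \ U).card = k → C.card + 2 ≤ U.card →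
      ∀ u ∈ U \ C, ∃ t ∈ U \ C, t ≠ u ∧ gval v C U u ≤ gval v C U t := by
  intro k
  induction k with
  | zero =>
    intro C U hk hmargin u hu
    have hsub : C ⊆ U := by
      rw [← Finset.sdiff_eq_empty_iff_subset]
      exact Finset.card_eq_zero.mp hk
    exact lemma0 v hv _ C U hsub hmargin rfl u hu
  | succ k ihk =>
    intro C U hk hmargin u hu
    by_contra hcon
    push_neg at hcon
    have hstrict : ∀ t ∈ U \ C, t ≠ u → gval v C U t < gval v C U u := hcon
    obtain ⟨huU, huC⟩ := Finset.mem_sdiff.mp hu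
    have hCne : (C \ U).Nonempty := by rw [← Finset.card_pos, hk]; omega
    obtain ⟨e, he⟩ := hCne
    have heC : e ∈ C := (Finset.mem_sdiff.mp he).1
    have heU : e ∉ U := (Finset.mem_sdiff.mp he).2
    have hCpos : 1 ≤ C.card := Finset.card_pos.mpr ⟨e, heC⟩
    have hC'card : (C.erase e).card = C.card - 1 := Finset.card_erase_of_mem heC
    have hUC' : U \ C.erase e = U \ C := by
      ext x
      simp only [Finset.mem_sdiff, Finset.mem_erase]
      constructor
      · rintro ⟨h1, h2⟩
        exact ⟨h1, fun hx => h2 ⟨fun hxe => heU (hxe ▸ h1), hx⟩⟩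
      · rintro ⟨h1, h2⟩
        exact ⟨h1, fun hx => h2 hx.2⟩
    have hkC' : (C.erase e \ U).card = k := by
      have hset : C.erase e \ U = (C \ U).erase e := by
        ext x
        simp only [Finset.mem_sdiff, Finset.mem_erase]
        tauto
      rw [hset, Finset.card_erase_of_mem he, hk]
      omega
    have hmargin' : (C.erase e).card + 2 ≤ U.card := by omega
    have hCins : insert e (C.erase e) = C := Finset.insert_erase heC
    have gid : ∀ t, gval v C U t
        = gval v (C.erase e) U t + (v C - v (C.erase e)) + comp v (C.erase e) e t := by
      intro t
      have h := gval_insert v (C.erase e) U e t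
      rwa [hCins] at h
    -- get t₀ with comp (C.erase e) e t₀ < comp (C.erase e) e u
    obtain ⟨t₀, ht₀, ht₀u, ht₀le⟩ :=
      ihk (C.erase e) U hkC' hmargin' u (by rw [hUC']; exact hu)
    rw [hUC'] at ht₀
    have h2 : comp v (C.erase e) e t₀ < comp v (C.erase e) e u := by
      have h1 := hstrict t₀ ht₀ ht₀u
      have ga := gid t₀
      have gb := gid u
      linarith
    -- minimal element of T
    have hTne : (((U \ C).erase u).filter
        (fun t => comp v (C.erase e) e t < comp v (C.erase e) e u)).Nonempty := by
      refine ⟨t₀, ?_⟩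
      simp only [Finset.mem_filter, Finset.mem_erase]
      exact ⟨⟨ht₀u, ht₀⟩, h2⟩
    obtain ⟨w, hwT, hwmin⟩ :=
      (((U \ C).erase u).filter
        (fun t => comp v (C.erase e) e t < comp v (C.erase e) e u)).exists_min_image
        (fun t => comp v (C.erase e) e t) hTne
    simp only [Finset.mem_filter, Finset.mem_erase] at hwT
    obtain ⟨⟨hwu, hwD⟩, hwlt⟩ := hwT
    obtain ⟨hwU, hwC⟩ := Finset.mem_sdiff.mp hwD
    have hwC' : w ∉ C.erase e := fun h => hwC (Finset.mem_of_mem_erase h)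
    have huC' : u ∉ C.erase e := fun h => huC (Finset.mem_of_mem_erase h)
    have heC' : e ∉ C.erase e := Finset.notMem_erase e C
    have heu : e ≠ u := fun h => heU (h ▸ huU)
    have hew : e ≠ w := fun h => heU (h ▸ hwU)
    have hinv : comp v (C.erase e) u w = comp v (C.erase e) e u :=
      hv (C.erase e) e u w heC' huC' hwC' heu hew hwu.symm hwlt
    -- double instance
    have hC₂card : (insert w (C.erase e)).card = C.card := by
      rw [Finset.card_insert_of_notMem hwC']; omega
    have hset₂ : insert w (C.erase e) \ U = C.erase e \ U := by
      ext x
      simp only [Finset.mem_sdiff, Finset.mem_insert]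
      constructor
      · rintro ⟨h1 | h1, h2⟩
        · exact absurd (h1 ▸ hwU) h2
        · exact ⟨h1, h2⟩
      · rintro ⟨h1, h2⟩
        exact ⟨Or.inr h1, h2⟩
    have hkC₂ : (insert w (C.erase e) \ U).card = k := by rw [hset₂, hkC']
    have hmargin₂ : (insert w (C.erase e)).card + 2 ≤ U.card := by omega
    have hUC₂ : U \ insert w (C.erase e) = (U \ C).erase w := by
      rw [sdiff_insert', hUC']
    have hu₂ : u ∈ U \ insert w (C.erase e) := by
      rw [hUC₂]; exact Finset.mem_erase.mpr ⟨hwu.symm, hu⟩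
    obtain ⟨t', ht', ht'u, ht'le⟩ := ihk (insert w (C.erase e)) U hkC₂ hmargin₂ u hu₂
    rw [hUC₂] at ht'
    have ht'w : t' ≠ w := (Finset.mem_erase.mp ht').1
    have ht'D : t' ∈ U \ C := Finset.mem_of_mem_erase ht'
    obtain ⟨ht'U, ht'C⟩ := Finset.mem_sdiff.mp ht'D
    have ht'C' : t' ∉ C.erase e := fun h => ht'C (Finset.mem_of_mem_erase h)
    have het' : e ≠ t' := fun h => heU (h ▸ ht'U)
    have gid₂ : ∀ t, gval v (insert w (C.erase e)) U t
        = gval v (C.erase e) U t + (v (insert w (C.erase e)) - v (C.erase e))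
          + comp v (C.erase e) w t := fun t => gval_insert v (C.erase e) U w t
    have hcu : comp v (C.erase e) w u = comp v (C.erase e) e u :=
      (comp_comm v (C.erase e) w u).trans hinv
    have hstep : comp v (C.erase e) e t' < comp v (C.erase e) w t' := by
      have h1 := hstrict t' ht'D ht'u
      have a1 := gid t'
      have a2 := gid u
      have b1 := gid₂ t'
      have b2 := gid₂ u
      linarith
    have hult : comp v (C.erase e) w e = comp v (C.erase e) t' w := by
      apply hv (C.erase e) t' w e ht'C' hwC' heC' ht'w het'.symm hew.symm
      rw [comp_comm v (C.erase e) t' w, comp_comm v (C.erase e) t' e]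
      exact hstep
    -- conclude : comp e t' < comp e w, contradicting minimality
    have hlt' : comp v (C.erase e) e t' < comp v (C.erase e) e w := by
      have c1 : comp v (C.erase e) e w = comp v (C.erase e) w e := comp_comm _ _ _ _
      have c2 : comp v (C.erase e) t' w = comp v (C.erase e) w t' := comp_comm _ _ _ _
      linarith
    have ht'T : t' ∈ ((U \ C).erase u).filter
        (fun t => comp v (C.erase e) e t < comp v (C.erase e) e u) := by
      simp only [Finset.mem_filter, Finset.mem_erase]
      exact ⟨⟨ht'u, ht'D⟩, by linarith⟩
    have := hwmin t' ht'T
    linarith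

end UltraExchangeAux

/-- The Ultra property implies the Exchange property. -/
theorem ultraProp_implies_exchange {α : Type*} [DecidableEq α]
    (v : Finset α → ℝ) (hv : UltraProp v) : IsUltra v := by
  intro A B hcard x hx
  obtain ⟨hxA, hxB⟩ := Finset.mem_sdiff.mp hx
  have hAcard : 1 ≤ A.card := Finset.card_pos.mpr ⟨x, hxA⟩
  have hmargin : (A.erase x).card + 2 ≤ (insert x B).card := by
    rw [Finset.card_erase_of_mem hxA, Finset.card_insert_of_notMem hxB]
    omega
  have hu : x ∈ insert x B \ A.erase x :=
    Finset.mem_sdiff.mpr ⟨Finset.mem_insert_self x B, Finset.notMem_erase x A⟩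
  obtain ⟨y, hy, hyx, hle⟩ := UltraExchangeAux.lemmaMain v hv
    ((A.erase x) \ (insert x B)).card (A.erase x) (insert x B) rfl hmargin x hu
  obtain ⟨hyU, hyC⟩ := Finset.mem_sdiff.mp hy
  have hyB : y ∈ B := by
    rcases Finset.mem_insert.mp hyU with h | h
    · exact absurd h hyx
    · exact h
  have hyA : y ∉ A := fun h => hyC (Finset.mem_erase.mpr ⟨hyx, h⟩)
  refine ⟨y, Finset.mem_sdiff.mpr ⟨hyB, hyA⟩, ?_⟩
  unfold UltraExchangeAux.gval at hle
  rw [Finset.insert_erase hxA, Finset.erase_insert hxB,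
    Finset.erase_insert_of_ne (fun h => hyx h.symm)] at hle
  exact hle
end

section
/- The properties LLN and RGP of a valuation v on a finite set Ω are equivalent. -/
/-- Marginal value `v_S(a | b) = v(S ∪ {a,b}) - v(S ∪ {b})`. -/
def mv {α : Type*} [DecidableEq α] (v : Finset α → ℝ) (S : Finset α) (a b : α) : ℝ :=
  v (insert a (insert b S)) - v (insert b S)

def LLN {α : Type*} [DecidableEq α] (v : Finset α → ℝ) : Prop :=
  ∀ S : Finset α, ∀ x y z : α, x ∉ S → y ∉ S → z ∉ S →
    x ≠ y → x ≠ z → y ≠ z →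
    mv v S z x > mv v S z y → mv v S x y ≥ mv v S x z

def RGP {α : Type*} [DecidableEq α] (v : Finset α → ℝ) : Prop :=
  ∀ S : Finset α, ∀ x y z : α, x ∉ S → y ∉ S → z ∉ S →
    x ≠ y → x ≠ z → y ≠ z →
    (v (insert x (insert y S)) - v S) + (v (insert z S) - v S) ≤
      max ((v (insert x (insert z S)) - v S) + (v (insert y S) - v S))
          ((v (insert y (insert z S)) - v S) + (v (insert x S) - v S))

/-- LLN and RGP are equivalent. -/
theorem lln_iff_rgp {α : Type*} [DecidableEq α] (v : Finset α → ℝ) :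
    LLN v ↔ RGP v := by
  have norm : ∀ (S : Finset α) (x y z : α),
      insert y (insert x S) = insert x (insert y S) ∧
      insert z (insert x S) = insert x (insert z S) ∧
      insert z (insert y S) = insert y (insert z S) :=
    fun S x y z => ⟨Finset.insert_comm _ _ _, Finset.insert_comm _ _ _,
      Finset.insert_comm _ _ _⟩
  constructor
  · intro h S x y z hx hy hz hxy hxz hyz
    by_contra hc
    push_neg at hc
    rw [max_lt_iff] at hc
    obtain ⟨h1, h2⟩ := hc
    have key := h S y z x hy hz hx hyz hxy.symm hxz.symm
    obtain ⟨e1, e2, e3⟩ := norm S x y z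
    simp only [mv, e1, e2, e3] at key
    have k2 := key (by linarith)
    linarith
  · intro h S x y z hx hy hz hxy hxz hyz hlt
    have key := h S x z y hx hz hy hxz hxy hyz.symm
    obtain ⟨e1, e2, e3⟩ := norm S x y z
    simp only [mv, e1, e2, e3] at hlt ⊢
    simp only [e3] at key
    rcases le_max_iff.mp key with h1 | h1 <;> linarith
end

section
/- Any valuation v satisfying LLN satisfies the Ultra property. -/
lemma comp_comm {α : Type*} [DecidableEq α] (v : Finset α → ℝ) (A : Finset α) (x y : α) :
    comp v A x y = comp v A y x := by
  unfold comp; rw [Finset.insert_comm]; ring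

lemma comp_sub_mv {α : Type*} [DecidableEq α] (v : Finset α → ℝ) (A : Finset α) (x y z : α) :
    comp v A x y - comp v A x z = mv v A x y - mv v A x z := by
  unfold comp mv; ring

/-- Any valuation satisfying LLN satisfies the Ultra property. -/
theorem lln_implies_ultraProp {α : Type*} [DecidableEq α]
    (v : Finset α → ℝ) (hv : LLN v) : UltraProp v := by
  intro A x y z hx hy hz hxy hxz hyz h
  have h1 : mv v A x y > mv v A x z := by
    have := comp_sub_mv v A x y z; linarith
  have h2 : mv v A y z ≥ mv v A y x := hv A y z x hy hz hx hyz hxy.symm hxz.symm h1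
  have key : comp v A y z - comp v A x y = mv v A y z - mv v A y x := by
    rw [comp_comm v A x y]; exact comp_sub_mv v A y z x
  rcases eq_or_lt_of_le h2 with heq | hlt
  · linarith
  · exfalso
    have h3 : mv v A z x ≥ mv v A z y := hv A z x y hz hx hy hxz.symm hyz.symm hxy hlt
    have k2 : comp v A x z - comp v A y z = mv v A z x - mv v A z y := by
      rw [comp_comm v A x z, comp_comm v A y z]; exact comp_sub_mv v A z x y
    linarith
end

section
/- The Exchange property implies the DT property: if v is an ultra valuation, then for any S ⊆ Ω, any T ⊆ Ω \ S with |T| ≥ 3, and any x ∈ T, there exists y ∈ T, y ≠ x, such that v(S ∪ {x}) + v(S ∪ T \ {x}) ≤ v(S ∪ {y}) + v(S ∪ T \ {y}). -/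
/-- The Exchange property implies the DT property. -/
theorem exchange_implies_dt {α : Type*} [DecidableEq α]
    (v : Finset α → ℝ) (hv : IsUltra v) :
    ∀ S T : Finset α, Disjoint T S → 3 ≤ T.card → ∀ x ∈ T,
      ∃ y ∈ T, y ≠ x ∧
        v (insert x S) + v (S ∪ T.erase x) ≤
          v (insert y S) + v (S ∪ T.erase y) := by
  intro S T hdisj hcard x hx
  have hxS : x ∉ S := fun h => (Finset.disjoint_left.mp hdisj hx) h
  have hdisjSE : Disjoint S (T.erase x) :=
    (hdisj.symm.mono_right (Finset.erase_subset _ _))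
  set A := insert x S with hA
  set B := S ∪ T.erase x with hB
  have hAcard : A.card = S.card + 1 := Finset.card_insert_of_notMem hxS
  have hBcard : B.card = S.card + (T.card - 1) := by
    rw [hB, Finset.card_union_of_disjoint hdisjSE, Finset.card_erase_of_mem hx]
  have hle : A.card ≤ B.card := by
    rw [hAcard, hBcard]; omega
  have hxAB : x ∈ A \ B := by
    rw [Finset.mem_sdiff]
    refine ⟨Finset.mem_insert_self _ _, fun h => ?_⟩
    rcases Finset.mem_union.mp h with h | h
    · exact hxS h
    · exact (Finset.mem_erase.mp h).1 rfl
  obtain ⟨y, hy, hineq⟩ := hv A B hle x hxAB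
  rw [Finset.mem_sdiff] at hy
  have hyB := hy.1
  have hyA := hy.2
  have hyS : y ∉ S := fun h => hyA (Finset.mem_insert_of_mem h)
  have hyTE : y ∈ T.erase x := by
    rcases Finset.mem_union.mp hyB with h | h
    · exact absurd h hyS
    · exact h
  have hyx : y ≠ x := (Finset.mem_erase.mp hyTE).1
  have hyT : y ∈ T := (Finset.mem_erase.mp hyTE).2
  refine ⟨y, hyT, hyx, ?_⟩
  have e1 : A.erase x = S := by
    rw [hA, Finset.erase_insert hxS]
  have e2 : insert x (B.erase y) = S ∪ T.erase y := by
    ext z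
    simp only [hB, Finset.mem_insert, Finset.mem_erase, Finset.mem_union]
    constructor
    · rintro (rfl | ⟨hzy, hzS | ⟨hzx, hzT⟩⟩)
      · exact Or.inr ⟨hyx.symm, hx⟩
      · exact Or.inl hzS
      · exact Or.inr ⟨hzy, hzT⟩
    · rintro (hzS | ⟨hzy, hzT⟩)
      · exact Or.inr ⟨fun h => hyS (h ▸ hzS), Or.inl hzS⟩
      · by_cases hzx : z = x
        · exact Or.inl hzx
        · exact Or.inr ⟨hzy, Or.inr ⟨hzx, hzT⟩⟩
  rw [e1, e2] at hineq
  exact hineq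
end

section
/- Let v be an ultra valuation, A a k₁-preferred bundle, B a k₂-preferred bundle with k₁ ≤ k₂, and x ∈ A \ B. Then there exists y ∈ B \ A such that A \ {x} ∪ {y} is a k₁-preferred bundle and B \ {y} ∪ {x} is a k₂-preferred bundle. -/
/-- `A` is a `k`-preferred bundle: it has size `k` and maximizes `v`
among bundles of size `k`. -/
def Pref {α : Type*} (v : Finset α → ℝ) (k : ℕ) (A : Finset α) : Prop :=
  A.card = k ∧ ∀ C : Finset α, C.card = k → v C ≤ v A

theorem two_preferred_exchange {α : Type*} [DecidableEq α]
    (v : Finset α → ℝ) (hv : IsUltra v)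
    (k₁ k₂ : ℕ) (hk : k₁ ≤ k₂) (A B : Finset α)
    (hA : Pref v k₁ A) (hB : Pref v k₂ B)
    (x : α) (hx : x ∈ A \ B) :
    ∃ y ∈ B \ A, Pref v k₁ (insert y (A.erase x)) ∧
      Pref v k₂ (insert x (B.erase y)) := by
  obtain ⟨hAc, hAmax⟩ := hA
  obtain ⟨hBc, hBmax⟩ := hB
  obtain ⟨y, hy, hvle⟩ := hv A B (by omega) x hx
  rw [Finset.mem_sdiff] at hx hy
  have hxA := hx.1; have hxB := hx.2
  have hyB := hy.1; have hyA := hy.2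
  have hcardA : (insert y (A.erase x)).card = k₁ := by
    rw [Finset.card_insert_of_notMem (fun h => hyA (Finset.mem_of_mem_erase h)),
      Finset.card_erase_of_mem hxA, hAc]
    have : 1 ≤ k₁ := by
      rw [← hAc]; exact Finset.card_pos.mpr ⟨x, hxA⟩
    omega
  have hcardB : (insert x (B.erase y)).card = k₂ := by
    rw [Finset.card_insert_of_notMem (fun h => hxB (Finset.mem_of_mem_erase h)),
      Finset.card_erase_of_mem hyB, hBc]
    have : 1 ≤ k₂ := by
      rw [← hBc]; exact Finset.card_pos.mpr ⟨y, hyB⟩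
    omega
  have h1 := hAmax _ hcardA
  have h2 := hBmax _ hcardB
  have e1 : v (insert y (A.erase x)) = v A := by linarith
  have e2 : v (insert x (B.erase y)) = v B := by linarith
  exact ⟨y, Finset.mem_sdiff.mpr ⟨hyB, hyA⟩,
    ⟨hcardA, fun C hC => e1 ▸ hAmax C hC⟩,
    ⟨hcardB, fun C hC => e2 ▸ hBmax C hC⟩⟩
end

section
/- Let v be an ultra valuation on Ω with |Ω| = n, let 0 < k < n, and let A be a k-preferred bundle. Then there exists x ∈ Ω \ A such that A ∪ {x} is a (k+1)-preferred bundle, and there exists x ∈ A such that A \ {x} is a (k−1)-preferred bundle. -/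
lemma pref_exists {α : Type*} [Fintype α] [DecidableEq α] (v : Finset α → ℝ) (m : ℕ)
    (hm : m ≤ Fintype.card α) : ∃ B, Pref v m B := by
  have hne : (Finset.univ.powersetCard m : Finset (Finset α)).Nonempty := by
    obtain ⟨s, _, hs⟩ := Finset.exists_subset_card_eq
      (le_of_le_of_eq hm (Finset.card_univ (α := α)).symm)
    exact ⟨s, Finset.mem_powersetCard.2 ⟨Finset.subset_univ _, hs⟩⟩
  obtain ⟨B, hB, hmax⟩ := Finset.exists_max_image _ v hne
  exact ⟨B, (Finset.mem_powersetCard.1 hB).2,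
    fun C hC => hmax C (Finset.mem_powersetCard.2 ⟨Finset.subset_univ _, hC⟩)⟩

lemma up_sub {α : Type*} [DecidableEq α] (v : Finset α → ℝ) {k : ℕ} {A B : Finset α}
    (hA : A.card = k) (hB : Pref v (k + 1) B) (hsub : A ⊆ B) :
    ∃ x ∉ A, Pref v (k + 1) (insert x A) := by
  have hc : (B \ A).card = 1 := by
    rw [Finset.card_sdiff_of_subset hsub, hB.1, hA]; omega
  obtain ⟨x, hx⟩ := Finset.card_eq_one.1 hc
  have hxBA : x ∈ B \ A := by rw [hx]; exact Finset.mem_singleton_self x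
  have hxA : x ∉ A := (Finset.mem_sdiff.1 hxBA).2
  have hins : insert x A = B := by
    rw [Finset.insert_eq, ← hx, Finset.sdiff_union_of_subset hsub]
  exact ⟨x, hxA, hins ▸ hB⟩

lemma down_sub {α : Type*} [DecidableEq α] (v : Finset α → ℝ) {k : ℕ} (hk0 : 0 < k)
    {A B : Finset α} (hA : A.card = k) (hB : Pref v (k - 1) B) (hsub : B ⊆ A) :
    ∃ x ∈ A, Pref v (k - 1) (A.erase x) := by
  have hc : (A \ B).card = 1 := by
    rw [Finset.card_sdiff_of_subset hsub, hB.1, hA]; omega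
  obtain ⟨x, hx⟩ := Finset.card_eq_one.1 hc
  have hxAB : x ∈ A \ B := by rw [hx]; exact Finset.mem_singleton_self x
  have hxA : x ∈ A := (Finset.mem_sdiff.1 hxAB).1
  have he : A.erase x = B := by
    rw [Finset.erase_eq, ← hx, Finset.sdiff_sdiff_self_left,
      Finset.inter_eq_right.2 hsub]
  exact ⟨x, hxA, he ▸ hB⟩

lemma up_aux {α : Type*} [DecidableEq α] (v : Finset α → ℝ) (hv : IsUltra v)
    {k : ℕ} {A : Finset α} (hA : Pref v k A) :
    ∀ n (B : Finset α), (B \ A).card ≤ n → Pref v (k + 1) B →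
      ∃ x ∉ A, Pref v (k + 1) (insert x A) := by
  intro n
  induction n with
  | zero =>
    intro B hc hB
    have hsub : B ⊆ A := Finset.sdiff_eq_empty_iff_subset.1 (Finset.card_eq_zero.1 (Nat.le_zero.1 hc))
    have := Finset.card_le_card hsub
    rw [hB.1, hA.1] at this
    omega
  | succ n ih =>
    intro B hc hB
    by_cases hsub : A ⊆ B
    · exact up_sub v hA.1 hB hsub
    · obtain ⟨x, hxA, hxB⟩ := Finset.not_subset.1 hsub
      have hx : x ∈ A \ B := Finset.mem_sdiff.2 ⟨hxA, hxB⟩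
      obtain ⟨y, hy, hineq⟩ := hv A B (by rw [hA.1, hB.1]; omega) x hx
      have hyB : y ∈ B := (Finset.mem_sdiff.1 hy).1
      have hyA : y ∉ A := (Finset.mem_sdiff.1 hy).2
      have hcard1 : (insert y (A.erase x)).card = k := by
        rw [Finset.card_insert_of_notMem (fun h => hyA (Finset.mem_of_mem_erase h)),
          Finset.card_erase_of_mem hxA, hA.1]
        have : 1 ≤ A.card := Finset.card_pos.2 ⟨x, hxA⟩
        rw [hA.1] at this
        omega
      have h1 : v (insert y (A.erase x)) ≤ v A := hA.2 _ hcard1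
      set B' := insert x (B.erase y) with hB'def
      have hcard2 : B'.card = k + 1 := by
        rw [hB'def, Finset.card_insert_of_notMem (fun h => hxB (Finset.mem_of_mem_erase h)),
          Finset.card_erase_of_mem hyB, hB.1]
        omega
      have h2 : v B ≤ v B' := by linarith
      have hBpref : Pref v (k + 1) B' :=
        ⟨hcard2, fun C hC => le_trans (hB.2 C hC) h2⟩
      have hsub2 : B' \ A ⊆ (B \ A).erase y := by
        intro a ha
        rw [Finset.mem_sdiff, hB'def, Finset.mem_insert] at ha
        rcases ha with ⟨h1' | h1', h2'⟩
        · exact absurd (h1' ▸ hxA) h2'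
        · exact Finset.mem_erase.2 ⟨(Finset.mem_erase.1 h1').1,
            Finset.mem_sdiff.2 ⟨(Finset.mem_erase.1 h1').2, h2'⟩⟩
      have hcle : (B' \ A).card ≤ n := by
        have := Finset.card_le_card hsub2
        rw [Finset.card_erase_of_mem hy] at this
        omega
      exact ih B' hcle hBpref

lemma down_aux {α : Type*} [DecidableEq α] (v : Finset α → ℝ) (hv : IsUltra v)
    {k : ℕ} (hk0 : 0 < k) {A : Finset α} (hA : Pref v k A) :
    ∀ n (B : Finset α), (B \ A).card ≤ n → Pref v (k - 1) B →
      ∃ x ∈ A, Pref v (k - 1) (A.erase x) := by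
  intro n
  induction n with
  | zero =>
    intro B hc hB
    exact down_sub v hk0 hA.1 hB
      (Finset.sdiff_eq_empty_iff_subset.1 (Finset.card_eq_zero.1 (Nat.le_zero.1 hc)))
  | succ n ih =>
    intro B hc hB
    by_cases hsub : B ⊆ A
    · exact down_sub v hk0 hA.1 hB hsub
    · obtain ⟨x, hxB, hxA⟩ := Finset.not_subset.1 hsub
      have hx : x ∈ B \ A := Finset.mem_sdiff.2 ⟨hxB, hxA⟩
      obtain ⟨y, hy, hineq⟩ := hv B A (by rw [hA.1, hB.1]; omega) x hx
      have hyA : y ∈ A := (Finset.mem_sdiff.1 hy).1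
      have hyB : y ∉ B := (Finset.mem_sdiff.1 hy).2
      have hcard1 : (insert x (A.erase y)).card = k := by
        rw [Finset.card_insert_of_notMem (fun h => hxA (Finset.mem_of_mem_erase h)),
          Finset.card_erase_of_mem hyA, hA.1]
        omega
      have h1 : v (insert x (A.erase y)) ≤ v A := hA.2 _ hcard1
      set B' := insert y (B.erase x) with hB'def
      have hcard2 : B'.card = k - 1 := by
        rw [hB'def, Finset.card_insert_of_notMem (fun h => hyB (Finset.mem_of_mem_erase h)),
          Finset.card_erase_of_mem hxB, hB.1]
        have : 1 ≤ B.card := Finset.card_pos.2 ⟨x, hxB⟩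
        rw [hB.1] at this
        omega
      have h2 : v B ≤ v B' := by linarith
      have hBpref : Pref v (k - 1) B' :=
        ⟨hcard2, fun C hC => le_trans (hB.2 C hC) h2⟩
      have hsub2 : B' \ A ⊆ (B \ A).erase x := by
        intro a ha
        rw [Finset.mem_sdiff, hB'def, Finset.mem_insert] at ha
        rcases ha with ⟨h1' | h1', h2'⟩
        · exact absurd (h1' ▸ hyA) h2'
        · exact Finset.mem_erase.2 ⟨(Finset.mem_erase.1 h1').1,
            Finset.mem_sdiff.2 ⟨(Finset.mem_erase.1 h1').2, h2'⟩⟩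
      have hcle : (B' \ A).card ≤ n := by
        have := Finset.card_le_card hsub2
        rw [Finset.card_erase_of_mem hx] at this
        omega
      exact ih B' hcle hBpref

theorem preferred_up_down {α : Type*} [Fintype α] [DecidableEq α]
    (v : Finset α → ℝ) (hv : IsUltra v)
    (k : ℕ) (hk0 : 0 < k) (hkn : k < Fintype.card α)
    (A : Finset α) (hA : Pref v k A) :
    (∃ x ∉ A, Pref v (k + 1) (insert x A)) ∧
    (∃ x ∈ A, Pref v (k - 1) (A.erase x)) := by
  obtain ⟨Bu, hBu⟩ := pref_exists v (k + 1) (by omega)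
  obtain ⟨Bd, hBd⟩ := pref_exists v (k - 1) (by omega)
  exact ⟨up_aux v hv hA _ Bu le_rfl hBu, down_aux v hv hk0 hA _ Bd le_rfl hBd⟩
end

section
/- Let v be an ultra valuation, S a k-preferred bundle, and x an element of Ω \ S maximizing v(S ∪ {x}) − v(S) over Ω \ S. Then S ∪ {x} is a (k+1)-preferred bundle. -/
/-- Greedy step: if `S` is `k`-preferred and `x ∉ S` maximizes the marginal
value `v(S ∪ {x}) - v(S)` over `Ω \ S`, then `S ∪ {x}` is `(k+1)`-preferred. -/
theorem greedy_step {α : Type*} [Fintype α] [DecidableEq α]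
    (v : Finset α → ℝ) (hv : IsUltra v)
    (k : ℕ) (hk : k < Fintype.card α)
    (S : Finset α) (hS : Pref v k S)
    (x : α) (hx : x ∉ S)
    (hmax : ∀ y ∉ S, v (insert y S) - v S ≤ v (insert x S) - v S) :
    Pref v (k + 1) (insert x S) := by
  obtain ⟨hScard, hSmax⟩ := hS
  refine ⟨by rw [Finset.card_insert_of_notMem hx, hScard], ?_⟩
  intro C hC
  suffices h : ∀ n (C : Finset α), (S \ C).card = n → C.card = k + 1 →
      v C ≤ v (insert x S) from h _ C rfl hC
  clear hC C
  intro n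
  induction n with
  | zero =>
    intro C hSC hC
    have hsub : S ⊆ C := by
      rw [← Finset.sdiff_eq_empty_iff_subset]
      exact Finset.card_eq_zero.mp hSC
    obtain ⟨y, hy⟩ : ∃ y, y ∈ C \ S := by
      apply Finset.card_pos.mp
      rw [Finset.card_sdiff_of_subset hsub, hC, hScard]
      omega
    obtain ⟨hyC, hyS⟩ := Finset.mem_sdiff.mp hy
    have hCeq : insert y S = C := by
      apply Finset.eq_of_subset_of_card_le
      · exact Finset.insert_subset hyC hsub
      · rw [hC, Finset.card_insert_of_notMem hyS, hScard]
    rw [← hCeq]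
    have := hmax y hyS
    linarith
  | succ n ih =>
    intro C hSC hC
    obtain ⟨z, hz⟩ : ∃ z, z ∈ S \ C := Finset.card_pos.mp (by omega)
    obtain ⟨hzS, hzC⟩ := Finset.mem_sdiff.mp hz
    obtain ⟨y, hy, hineq⟩ := hv S C (by rw [hScard, hC]; omega) z hz
    obtain ⟨hyC, hyS⟩ := Finset.mem_sdiff.mp hy
    have hk1 : 1 ≤ k := by
      rw [← hScard]
      exact Finset.card_pos.mpr ⟨z, hzS⟩
    have hA : (insert y (S.erase z)).card = k := by
      rw [Finset.card_insert_of_notMem (fun h => hyS (Finset.mem_of_mem_erase h)),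
        Finset.card_erase_of_mem hzS, hScard]
      omega
    have h1 : v (insert y (S.erase z)) ≤ v S := hSmax _ hA
    have hzCe : z ∉ C.erase y := fun h => hzC (Finset.mem_of_mem_erase h)
    have hC' : (insert z (C.erase y)).card = k + 1 := by
      rw [Finset.card_insert_of_notMem hzCe, Finset.card_erase_of_mem hyC, hC]; omega
    have key : S \ (insert z (C.erase y)) = (S \ C).erase z := by
      ext a
      simp only [Finset.mem_sdiff, Finset.mem_insert, Finset.mem_erase, not_or, not_and]
      constructor
      · rintro ⟨haS, haz, h⟩
        exact ⟨haz, haS, h (fun hay => hyS (hay ▸ haS))⟩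
      · rintro ⟨haz, haS, haC⟩
        exact ⟨haS, haz, fun _ => haC⟩
    have hcard' : (S \ (insert z (C.erase y))).card = n := by
      rw [key, Finset.card_erase_of_mem hz, hSC]; omega
    have h2 := ih (insert z (C.erase y)) hcard' hC'
    linarith
end

section
/- Let v be an ultra valuation and let A, B be preferred bundles (maximizing v over all subsets of Ω) with |A| ≤ |B|. Then there exists a preferred bundle C ⊆ B with |C| = |A|, and a preferred bundle D ⊇ A with |D| = |B|. -/
/-- `A` is a preferred bundle: it maximizes `v` over all subsets of `Ω`. -/
def Preferred {α : Type*} (v : Finset α → ℝ) (A : Finset α) : Prop :=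
  ∀ C : Finset α, v C ≤ v A

private lemma aux {α : Type*} [DecidableEq α]
    (v : Finset α → ℝ) (hv : IsUltra v) :
    ∀ n : ℕ, ∀ A B : Finset α, Preferred v A → Preferred v B →
    A.card ≤ B.card → (A \ B).card ≤ n →
    (∃ C : Finset α, Preferred v C ∧ C ⊆ B ∧ C.card = A.card) ∧
    (∃ D : Finset α, Preferred v D ∧ A ⊆ D ∧ D.card = B.card) := by
  intro n
  induction n with
  | zero =>
    intro A B hA hB hcard hd
    have hsub : A ⊆ B := by
      intro a ha
      by_contra hna
      have : a ∈ A \ B := Finset.mem_sdiff.2 ⟨ha, hna⟩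
      have := Finset.card_eq_zero.1 (Nat.le_zero.1 hd)
      simp [this] at *
    exact ⟨⟨A, hA, hsub, rfl⟩, ⟨B, hB, hsub, rfl⟩⟩
  | succ n ih =>
    intro A B hA hB hcard hd
    by_cases hsub : A ⊆ B
    · exact ⟨⟨A, hA, hsub, rfl⟩, ⟨B, hB, hsub, rfl⟩⟩
    · obtain ⟨x, hxA, hxB⟩ : ∃ x, x ∈ A ∧ x ∉ B := by
        rcases Finset.not_subset.1 hsub with ⟨x, hx1, hx2⟩
        exact ⟨x, hx1, hx2⟩
      obtain ⟨y, hy, hineq⟩ := hv A B hcard x (Finset.mem_sdiff.2 ⟨hxA, hxB⟩)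
      obtain ⟨hyB, hyA⟩ := Finset.mem_sdiff.1 hy
      set A' := insert y (A.erase x) with hA'def
      set B' := insert x (B.erase y) with hB'def
      have hA'pref : Preferred v A' := by
        intro C
        have h1 := hA A'
        have h2 := hB B'
        have h3 := hA C
        linarith
      have hB'pref : Preferred v B' := by
        intro C
        have h1 := hA A'
        have h2 := hB B'
        have h3 := hB C
        linarith
      have hcardA' : A'.card = A.card := by
        rw [hA'def, Finset.card_insert_of_notMem (by simp [hyA]),
          Finset.card_erase_of_mem hxA]
        have hA1 : 1 ≤ A.card := Finset.card_pos.2 ⟨x, hxA⟩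
        omega
      have hcardB' : B'.card = B.card := by
        rw [hB'def, Finset.card_insert_of_notMem (by simp [hxB]),
          Finset.card_erase_of_mem hyB]
        have hB1 : 1 ≤ B.card := Finset.card_pos.2 ⟨y, hyB⟩
        omega
      have hx_in : x ∈ A \ B := Finset.mem_sdiff.2 ⟨hxA, hxB⟩
      have hdA' : (A' \ B).card ≤ n := by
        have : A' \ B = (A \ B).erase x := by
          ext a
          simp only [hA'def, Finset.mem_sdiff, Finset.mem_insert, Finset.mem_erase]
          constructor
          · rintro ⟨h1 | ⟨h1, h2⟩, h3⟩
            · exact absurd (h1 ▸ hyB) h3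
            · exact ⟨h1, h2, h3⟩
          · rintro ⟨h1, h2, h3⟩
            exact ⟨Or.inr ⟨h1, h2⟩, h3⟩
        rw [this, Finset.card_erase_of_mem hx_in]
        omega
      have hdB' : (A \ B').card ≤ n := by
        have : A \ B' = (A \ B).erase x := by
          ext a
          simp only [hB'def, Finset.mem_sdiff, Finset.mem_insert, Finset.mem_erase]
          constructor
          · rintro ⟨h1, h2⟩
            push_neg at h2
            obtain ⟨h2, h3⟩ := h2
            have hay : a ≠ y := fun h => hyA (h ▸ h1)
            exact ⟨h2, h1, h3 hay⟩
          · rintro ⟨h1, h2, h3⟩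
            refine ⟨h2, ?_⟩
            push_neg
            exact ⟨h1, fun _ => h3⟩
        rw [this, Finset.card_erase_of_mem hx_in]
        omega
      have part1 := (ih A' B hA'pref hB (by omega) hdA').1
      have part2 := (ih A B' hA hB'pref (by omega) hdB').2
      rw [hcardA'] at part1
      rw [hcardB'] at part2
      exact ⟨part1, part2⟩

theorem preferred_between {α : Type*} [Fintype α] [DecidableEq α]
    (v : Finset α → ℝ) (hv : IsUltra v)
    (A B : Finset α) (hA : Preferred v A) (hB : Preferred v B)
    (hcard : A.card ≤ B.card) :
    (∃ C : Finset α, Preferred v C ∧ C ⊆ B ∧ C.card = A.card) ∧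
    (∃ D : Finset α, Preferred v D ∧ A ⊆ D ∧ D.card = B.card) := by
  exact aux v hv (A \ B).card A B hA hB hcard le_rfl
end

section
/- Let v be an ultra valuation and A ⊆ Ω with |A| = k. If v(A) ≥ v((A \ {x}) ∪ {y}) for all x ∈ A and y ∈ Ω \ A, then A maximizes v among all bundles of size k. -/
/-- A bundle that is locally optimal under single-item swaps is `k`-preferred. -/
theorem swap_local_implies_slice_optimal {α : Type*} [DecidableEq α]
    (v : Finset α → ℝ) (hv : IsUltra v)
    (A : Finset α)
    (hloc : ∀ x ∈ A, ∀ y ∉ A, v (insert y (A.erase x)) ≤ v A) :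
    ∀ C : Finset α, C.card = A.card → v C ≤ v A := by
  suffices H : ∀ n, ∀ C : Finset α, C.card = A.card → (C \ A).card = n → v C ≤ v A by
    intro C hC; exact H _ C hC rfl
  intro n
  induction n using Nat.strong_induction_on with
  | _ n ih =>
    intro C hC hn
    rcases Nat.eq_zero_or_pos n with h0 | hpos
    · subst h0
      have hsub : C ⊆ A := by
        rw [← Finset.sdiff_eq_empty_iff_subset]
        exact Finset.card_eq_zero.mp hn
      have : C = A := Finset.eq_of_subset_of_card_le hsub (le_of_eq hC.symm)
      simp [this]
    · have hCA : (C \ A).Nonempty := by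
        rw [← Finset.card_pos, hn]; exact hpos
      have hAC : (A \ C).Nonempty := by
        by_contra h
        rw [Finset.not_nonempty_iff_eq_empty, Finset.sdiff_eq_empty_iff_subset] at h
        have : A = C := Finset.eq_of_subset_of_card_le h (le_of_eq hC)
        rw [← this] at hCA
        simp at hCA
      obtain ⟨x, hx⟩ := hAC
      obtain ⟨y, hy, hineq⟩ := hv A C (le_of_eq hC.symm) x hx
      have hxA : x ∈ A := (Finset.mem_sdiff.mp hx).1
      have hxC : x ∉ C := (Finset.mem_sdiff.mp hx).2
      have hyC : y ∈ C := (Finset.mem_sdiff.mp hy).1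
      have hyA : y ∉ A := (Finset.mem_sdiff.mp hy).2
      have hswap : v (insert y (A.erase x)) ≤ v A := hloc x hxA y hyA
      set C' := insert x (C.erase y) with hC'
      have hvC : v C ≤ v C' := by linarith
      have hcard : C'.card = A.card := by
        rw [hC', Finset.card_insert_of_notMem (fun h => hxC (Finset.mem_of_mem_erase h)),
          Finset.card_erase_of_mem hyC, ← hC]
        have : 0 < C.card := Finset.card_pos.mpr ⟨y, hyC⟩
        omega
      have hsd : C' \ A = (C \ A).erase y := by
        ext z
        simp only [hC', Finset.mem_sdiff, Finset.mem_insert, Finset.mem_erase]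
        constructor
        · rintro ⟨hz1 | ⟨hz2, hz3⟩, hz4⟩
          · exact absurd (hz1 ▸ hxA) hz4
          · exact ⟨hz2, hz3, hz4⟩
        · rintro ⟨hz1, hz2, hz3⟩
          exact ⟨Or.inr ⟨hz1, hz2⟩, hz3⟩
      have hlt : (C' \ A).card < n := by
        rw [hsd, Finset.card_erase_of_mem hy, hn]
        omega
      exact le_trans hvC (ih _ hlt C' hcard rfl)
end

section
/- Let v be an ultra valuation. A bundle A ⊆ Ω maximizes v over all subsets of Ω if and only if: (1) A maximizes v among bundles of size |A|; (2) v(A) ≥ v(C) for all C ⊇ A; (3) v(A) ≥ v(C) for all C ⊆ A. -/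
lemma ultra_aux_small {α : Type*} [DecidableEq α] (v : Finset α → ℝ) (hv : IsUltra v)
    (A : Finset α) (h1 : ∀ C : Finset α, C.card = A.card → v C ≤ v A)
    (h3 : ∀ C : Finset α, C ⊆ A → v C ≤ v A) :
    ∀ n (C : Finset α), C.card ≤ A.card → (C \ A).card = n → v C ≤ v A := by
  intro n
  induction n with
  | zero =>
    intro C hc h0
    have hsub : C \ A = ∅ := Finset.card_eq_zero.mp h0
    exact h3 C (by rwa [← Finset.sdiff_eq_empty_iff_subset])
  | succ n ih =>
    intro C hc hn
    have hne : (C \ A).Nonempty := by rw [← Finset.card_pos, hn]; omega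
    obtain ⟨x, hx⟩ := hne
    obtain ⟨y, hy, hineq⟩ := hv C A hc x hx
    have hxC : x ∈ C := (Finset.mem_sdiff.1 hx).1
    have hxA : x ∉ A := (Finset.mem_sdiff.1 hx).2
    have hyA : y ∈ A := (Finset.mem_sdiff.1 hy).1
    have hyC : y ∉ C := (Finset.mem_sdiff.1 hy).2
    set C' := insert y (C.erase x) with hC'
    set A' := insert x (A.erase y) with hA'
    have hcardA' : A'.card = A.card := by
      rw [hA', Finset.card_insert_of_notMem (by simp [hxA]),
        Finset.card_erase_of_mem hyA]
      have := Finset.card_pos.2 ⟨y, hyA⟩; omega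
    have hcardC' : C'.card = C.card := by
      rw [hC', Finset.card_insert_of_notMem (by simp [hyC]),
        Finset.card_erase_of_mem hxC]
      have := Finset.card_pos.2 ⟨x, hxC⟩; omega
    have hsd : (C' \ A).card = n := by
      have heq : C' \ A = (C \ A).erase x := by
        ext z
        simp only [hC', Finset.mem_sdiff, Finset.mem_insert, Finset.mem_erase]
        constructor
        · rintro ⟨hz | ⟨hzx, hzC⟩, hzA⟩
          · exact absurd (hz ▸ hyA) hzA
          · exact ⟨hzx, hzC, hzA⟩
        · rintro ⟨hzx, hzC, hzA⟩
          exact ⟨Or.inr ⟨hzx, hzC⟩, hzA⟩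
      rw [heq, Finset.card_erase_of_mem hx, hn]; omega
    have h2' : v A' ≤ v A := h1 A' hcardA'
    have h3' : v C' ≤ v A := ih C' (by omega) hsd
    linarith

lemma ultra_aux_big {α : Type*} [DecidableEq α] (v : Finset α → ℝ) (hv : IsUltra v)
    (A : Finset α) (h1 : ∀ C : Finset α, C.card = A.card → v C ≤ v A)
    (h2 : ∀ C : Finset α, A ⊆ C → v C ≤ v A) :
    ∀ n (C : Finset α), A.card ≤ C.card → (A \ C).card = n → v C ≤ v A := by
  intro n
  induction n with
  | zero =>
    intro C hc h0
    exact h2 C (by rwa [← Finset.sdiff_eq_empty_iff_subset, ← Finset.card_eq_zero])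
  | succ n ih =>
    intro C hc hn
    have hne : (A \ C).Nonempty := by rw [← Finset.card_pos, hn]; omega
    obtain ⟨x, hx⟩ := hne
    obtain ⟨y, hy, hineq⟩ := hv A C hc x hx
    have hxA : x ∈ A := (Finset.mem_sdiff.1 hx).1
    have hxC : x ∉ C := (Finset.mem_sdiff.1 hx).2
    have hyC : y ∈ C := (Finset.mem_sdiff.1 hy).1
    have hyA : y ∉ A := (Finset.mem_sdiff.1 hy).2
    set A' := insert y (A.erase x) with hA'
    set C' := insert x (C.erase y) with hC'
    have hcardA' : A'.card = A.card := by
      rw [hA', Finset.card_insert_of_notMem (by simp [hyA]),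
        Finset.card_erase_of_mem hxA]
      have := Finset.card_pos.2 ⟨x, hxA⟩; omega
    have hcardC' : C'.card = C.card := by
      rw [hC', Finset.card_insert_of_notMem (by simp [hxC]),
        Finset.card_erase_of_mem hyC]
      have := Finset.card_pos.2 ⟨y, hyC⟩; omega
    have hsd : (A \ C').card = n := by
      have heq : A \ C' = (A \ C).erase x := by
        ext z
        simp only [hC', Finset.mem_sdiff, Finset.mem_insert, Finset.mem_erase,
          not_or, not_and]
        constructor
        · rintro ⟨hzA, hzx, hz⟩
          refine ⟨hzx, hzA, fun hzC => ?_⟩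
          rcases eq_or_ne z y with rfl | hzy
          · exact hyA hzA
          · exact (hz hzy) hzC
        · rintro ⟨hzx, hzA, hzC⟩
          exact ⟨hzA, hzx, fun _ h => hzC h⟩
      rw [heq, Finset.card_erase_of_mem hx, hn]; omega
    have h1' : v A' ≤ v A := h1 A' hcardA'
    have h3' : v C' ≤ v A := ih C' (by omega) hsd
    linarith

/-- Characterization of (globally) preferred bundles of an ultra valuation. -/
theorem preferred_characterization {α : Type*} [DecidableEq α]
    (v : Finset α → ℝ) (hv : IsUltra v) (A : Finset α) :
    (∀ C : Finset α, v C ≤ v A) ↔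
      ((∀ C : Finset α, C.card = A.card → v C ≤ v A) ∧
       (∀ C : Finset α, A ⊆ C → v C ≤ v A) ∧
       (∀ C : Finset α, C ⊆ A → v C ≤ v A)) := by
  constructor
  · intro h
    exact ⟨fun C _ => h C, fun C _ => h C, fun C _ => h C⟩
  · rintro ⟨h1, h2, h3⟩ C
    rcases le_or_gt C.card A.card with hle | hlt
    · exact ultra_aux_small v hv A h1 h3 _ C hle rfl
    · exact ultra_aux_big v hv A h1 h2 _ C hlt.le rfl
end

section
/- If v satisfies Ultra and w, x, y, z ∈ Ω are pairwise distinct, then c(w,y) + c(x,z) ≤ c(w,x) + c(y,z) or c(w,y) + c(x,z) ≤ c(x,y) + c(w,z), where c(a,b) = c_∅(a,b). -/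
lemma four_aux (a b d e f g : ℝ)
    (h1 : f > g → e = f) (h2 : b > d → g = b) (h3 : b > a → e = b)
    (h4 : f > d → a = f) (h5 : b > g → d = b) (hbf : f ≤ b) :
    b + f ≤ a + g ∨ b + f ≤ e + d := by
  by_contra hc
  push_neg at hc
  obtain ⟨hag, hed⟩ := hc
  rcases le_or_gt b a with hab | hab
  · have hfg : f > g := by linarith
    have he := h1 hfg
    have hbd : b > d := by linarith
    have hg := h2 hbd
    linarith
  · have he := h3 hab
    have hfd : f > d := by linarith
    have ha := h4 hfd
    have hbg : b > g := by linarith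
    have hd := h5 hbg
    linarith

theorem ultra_four_point {α : Type*} [DecidableEq α]
    (v : Finset α → ℝ) (hv : UltraProp v)
    (w x y z : α) (hwx : w ≠ x) (hwy : w ≠ y) (hwz : w ≠ z)
    (hxy : x ≠ y) (hxz : x ≠ z) (hyz : y ≠ z) :
    comp v ∅ w y + comp v ∅ x z ≤ comp v ∅ w x + comp v ∅ y z ∨
    comp v ∅ w y + comp v ∅ x z ≤ comp v ∅ x y + comp v ∅ w z := by
  have U : ∀ p q r : α, p ≠ q → p ≠ r → q ≠ r →
      comp v ∅ p q > comp v ∅ p r → comp v ∅ q r = comp v ∅ p q := fun p q r hpq hpr hqr h =>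
    hv ∅ p q r (Finset.notMem_empty p) (Finset.notMem_empty q) (Finset.notMem_empty r)
      hpq hpr hqr h
  have H1 : comp v ∅ x z > comp v ∅ y z → comp v ∅ x y = comp v ∅ x z := by
    intro h
    have := U z x y hxz.symm hyz.symm hxy
      (by rw [comp_comm v ∅ z x, comp_comm v ∅ z y]; exact h)
    rw [this]; exact comp_comm v ∅ z x
  have H2 : comp v ∅ w y > comp v ∅ w z → comp v ∅ y z = comp v ∅ w y :=
    fun h => U w y z hwy hwz hyz h
  have H3 : comp v ∅ w y > comp v ∅ w x → comp v ∅ x y = comp v ∅ w y := by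
    intro h
    have := U w y x hwy hwx hxy.symm h
    rw [comp_comm v ∅ x y]; exact this
  have H4 : comp v ∅ x z > comp v ∅ w z → comp v ∅ w x = comp v ∅ x z := by
    intro h
    have := U z x w hxz.symm hwz.symm hwx.symm
      (by rw [comp_comm v ∅ z x, comp_comm v ∅ z w]; exact h)
    rw [comp_comm v ∅ w x, this]; exact comp_comm v ∅ z x
  have H5 : comp v ∅ w y > comp v ∅ y z → comp v ∅ w z = comp v ∅ w y := by
    intro h
    have := U y w z hwy.symm hyz hwz (by rw [comp_comm v ∅ y w]; exact h)
    rw [this]; exact comp_comm v ∅ y w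
  have H2' : comp v ∅ x z > comp v ∅ x y → comp v ∅ y z = comp v ∅ x z := by
    intro h
    have := U x z y hxz hxy hyz.symm h
    rw [comp_comm v ∅ y z]; exact this
  have H3' : comp v ∅ x z > comp v ∅ w x → comp v ∅ w z = comp v ∅ x z := by
    intro h
    have := U x z w hxz hwx.symm hwz.symm (by rw [comp_comm v ∅ x w]; exact h)
    rw [comp_comm v ∅ w z]; exact this
  have H4' : comp v ∅ w y > comp v ∅ x y → comp v ∅ w x = comp v ∅ w y := by
    intro h
    have := U y w x hwy.symm hxy.symm hwx
      (by rw [comp_comm v ∅ y w, comp_comm v ∅ y x]; exact h)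
    rw [this]; exact comp_comm v ∅ y w
  rcases le_or_gt (comp v ∅ x z) (comp v ∅ w y) with hfb | hfb
  · exact four_aux (comp v ∅ w x) (comp v ∅ w y) (comp v ∅ w z) (comp v ∅ x y)
      (comp v ∅ x z) (comp v ∅ y z) H1 H2 H3 H4 H5 hfb
  · rcases four_aux (comp v ∅ w x) (comp v ∅ x z) (comp v ∅ x y) (comp v ∅ w z)
      (comp v ∅ w y) (comp v ∅ y z) H5 H2' H3' H4' H1 hfb.le with h | h
    · exact Or.inl (by linarith)
    · exact Or.inr (by linarith)
end
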